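/- arXiv:1805.06108 — 8 statements merged into one kernel-verified Lean document; each statement's English description precedes it below -/
import Mathlib

section
/- For all nonnegative integers N and M, the polynomial identity (∑_{n=0}^{MN} p_n(N,M) q^n) · ∏_{j=1}^{N} (1 − q^j) = ∏_{j=M+1}^{N+M} (1 − q^j) holds in the polynomial ring ℤ[q]. -/
/-- The number of partitions of `n` into at most `M` parts, each of size at most `N`. -/
def restrictedCount (n N M : ℕ) : ℕ :=
  Fintype.card {p : n.Partition // p.parts.card ≤ M ∧ ∀ i ∈ p.parts, i ≤ N}

/-!
Splitting the partitions in an `(N + 1) × (M + 1)` box according to whether they have a part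
equal to `N + 1`, and removing one such part, gives the `q`-Pascal recurrence
`G(N + 1, M + 1) = G(N, M + 1) + q ^ (N + 1) G(N + 1, M)` for the generating polynomial `G`.
The quotient `(q ^ (M + 1); q)_N / (q; q)_N` satisfies the same recurrence and the same boundary
values `1` at `N = 0` and at `M = 0`, so the identity follows by induction on `N` and `M`.
-/

open Polynomial Finset

namespace Nat.Partition

def FitsInBox {n : ℕ} (p : n.Partition) (N M : ℕ) : Prop :=
  p.parts.card ≤ M ∧ ∀ i ∈ p.parts, i ≤ N

instance {n N M : ℕ} : DecidablePred (FitsInBox (n := n) · N M) :=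
  fun _ => inferInstanceAs (Decidable (_ ∧ _))

variable {n : ℕ}

theorem fitsInBox_succ_and_not_mem_iff {p : n.Partition} {N M : ℕ} :
    p.FitsInBox (N + 1) M ∧ N + 1 ∉ p.parts ↔ p.FitsInBox N M := by
  refine ⟨fun ⟨⟨hc, hb⟩, hN⟩ => ⟨hc, fun i hi => ?_⟩,
    fun ⟨hc, hb⟩ => ⟨⟨hc, fun i hi => (hb i hi).trans N.le_succ⟩, fun h => ?_⟩⟩
  · exact Nat.le_of_lt_succ <| (hb i hi).lt_of_ne fun h => hN (h ▸ hi)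
  · exact absurd (hb _ h) (Nat.lt_irrefl N)

theorem card_fitsInBox_succ_succ (N M : ℕ) :
    Fintype.card {p : n.Partition // p.FitsInBox (N + 1) (M + 1)} =
      Fintype.card {p : n.Partition // p.FitsInBox N (M + 1)} +
        Fintype.card {p : n.Partition // N + 1 ∈ p.parts ∧ p.FitsInBox (N + 1) (M + 1)} := by
  have hdisj : Disjoint (fun p : n.Partition => p.FitsInBox N (M + 1))
      (fun p => N + 1 ∈ p.parts ∧ p.FitsInBox (N + 1) (M + 1)) :=
    fun _ h₁ h₂ p hp => absurd ((h₁ p hp).2 _ (h₂ p hp).1) N.not_succ_le_self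
  rw [← Fintype.card_subtype_or_disjoint _ _ hdisj]
  refine Fintype.card_congr (Equiv.subtypeEquivRight fun p => ?_)
  rw [← fitsInBox_succ_and_not_mem_iff (N := N)]
  tauto

theorem fitsInBox_partitionWithPartEquiv_symm_iff {a M : ℕ} (ha1 : 1 ≤ a) (ha : a ≤ n)
    (q : (n - a).Partition) :
    ((partitionWithPartEquiv ha1 ha).symm q).1.FitsInBox a (M + 1) ↔ q.FitsInBox a M := by
  simp [FitsInBox]

theorem card_mem_parts_and_fitsInBox {a M : ℕ} (ha1 : 1 ≤ a) (ha : a ≤ n) :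
    Fintype.card {p : n.Partition // a ∈ p.parts ∧ p.FitsInBox a (M + 1)} =
      Fintype.card {q : (n - a).Partition // q.FitsInBox a M} :=
  Fintype.card_congr <|
    (Equiv.subtypeSubtypeEquivSubtypeInter (fun p : n.Partition => a ∈ p.parts)
      (FitsInBox · a (M + 1))).symm.trans
    ((partitionWithPartEquiv ha1 ha).symm.subtypeEquiv fun q =>
      (fitsInBox_partitionWithPartEquiv_symm_iff ha1 ha q).symm).symm

end Nat.Partition

open Nat.Partition

theorem restrictedCount_eq_card_fitsInBox (n N M : ℕ) :
    restrictedCount n N M = Fintype.card {p : n.Partition // p.FitsInBox N M} := rfl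

theorem restrictedCount_zero (N M : ℕ) : restrictedCount 0 N M = 1 :=
  Fintype.card_eq_one_iff.2 ⟨⟨default, by simp⟩, fun _ => Subsingleton.elim _ _⟩

theorem restrictedCount_eq_zero_of_lt {n N M : ℕ} (h : M * N < n) :
    restrictedCount n N M = 0 := by
  refine Fintype.card_eq_zero_iff.2 ⟨fun ⟨p, hcard, hle⟩ => h.not_ge ?_⟩
  calc n = p.parts.sum := p.parts_sum.symm
    _ ≤ p.parts.card * N := by simpa using Multiset.sum_le_card_nsmul _ _ hle
    _ ≤ M * N := Nat.mul_le_mul_right N hcard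

theorem restrictedCount_succ_succ (n N M : ℕ) :
    restrictedCount n (N + 1) (M + 1) =
      restrictedCount n N (M + 1) +
        if N + 1 ≤ n then restrictedCount (n - (N + 1)) (N + 1) M else 0 := by
  simp only [restrictedCount_eq_card_fitsInBox, card_fitsInBox_succ_succ]
  split_ifs with h
  · rw [card_mem_parts_and_fitsInBox N.succ_pos h]
  · exact congrArg _ <| Fintype.card_eq_zero_iff.2 ⟨fun p => h (le_of_mem_parts p.2.1)⟩

section Polynomial

variable {R : Type*} [CommRing R]

variable (R) in
noncomputable def restrictedCountPoly (N M : ℕ) : R[X] :=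
  ∑ n ∈ range (M * N + 1), (restrictedCount n N M : R[X]) * X ^ n

theorem coeff_restrictedCountPoly (N M k : ℕ) :
    (restrictedCountPoly R N M).coeff k = restrictedCount k N M := by
  simp only [restrictedCountPoly, finsetSum_coeff, coeff_natCast_mul, coeff_X_pow, mul_ite,
    mul_one, mul_zero, sum_ite_eq, mem_range]
  split_ifs
  · rfl
  · rw [restrictedCount_eq_zero_of_lt (by omega), Nat.cast_zero]

theorem restrictedCountPoly_zero_left (M : ℕ) : restrictedCountPoly R 0 M = 1 := by
  simp [restrictedCountPoly, restrictedCount_zero]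

theorem restrictedCountPoly_zero_right (N : ℕ) : restrictedCountPoly R N 0 = 1 := by
  simp [restrictedCountPoly, restrictedCount_zero]

theorem restrictedCountPoly_succ_succ (N M : ℕ) :
    restrictedCountPoly R (N + 1) (M + 1) =
      restrictedCountPoly R N (M + 1) + X ^ (N + 1) * restrictedCountPoly R (N + 1) M := by
  ext k
  simp only [coeff_add, coeff_X_pow_mul', coeff_restrictedCountPoly, restrictedCount_succ_succ]
  split_ifs <;> simp

variable (R) in
/-- `(q ^ (M + 1); q)_N` in `q`-Pochhammer notation. -/
noncomputable def qPochhammer (M N : ℕ) : R[X] :=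
  ∏ i ∈ range N, (1 - X ^ (M + 1 + i))

theorem qPochhammer_zero (M : ℕ) : qPochhammer R M 0 = 1 := prod_range_zero _

theorem qPochhammer_succ (M N : ℕ) :
    qPochhammer R M (N + 1) = qPochhammer R M N * (1 - X ^ (M + 1 + N)) :=
  prod_range_succ _ _

theorem qPochhammer_succ' (M N : ℕ) :
    qPochhammer R M (N + 1) = (1 - X ^ (M + 1)) * qPochhammer R (M + 1) N := by
  rw [qPochhammer, qPochhammer, prod_range_succ', add_zero, mul_comm]
  exact congrArg _ <| prod_congr rfl fun i _ => congrArg (fun k => 1 - X ^ k) (by omega)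

theorem prod_Icc_one_sub_X_pow (M N : ℕ) :
    ∏ j ∈ Icc (M + 1) (N + M), (1 - X ^ j : R[X]) = qPochhammer R M N := by
  rw [← Ico_add_one_right_eq_Icc, prod_Ico_eq_prod_range, qPochhammer,
    show N + M + 1 - (M + 1) = N by omega]

theorem restrictedCountPoly_mul_qPochhammer (N M : ℕ) :
    restrictedCountPoly R N M * qPochhammer R 0 N = qPochhammer R M N := by
  induction N generalizing M with
  | zero => rw [restrictedCountPoly_zero_left, qPochhammer_zero, qPochhammer_zero, one_mul]
  | succ N ihN =>
    induction M with
    | zero => rw [restrictedCountPoly_zero_right, one_mul]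
    | succ M ihM =>
      rw [restrictedCountPoly_succ_succ]
      linear_combination restrictedCountPoly R N (M + 1) * qPochhammer_succ (R := R) 0 N
        + (1 - X ^ (N + 1)) * ihN (M + 1) + X ^ (N + 1) * ihM
        + X ^ (N + 1) * qPochhammer_succ' (R := R) M N - qPochhammer_succ (R := R) (M + 1) N

end Polynomial

open Polynomial in
theorem gaussian_polynomial_identity (N M : ℕ) :
    (∑ n ∈ Finset.range (M * N + 1), (restrictedCount n N M : ℤ[X]) * X ^ n) *
        ∏ j ∈ Finset.Icc 1 N, (1 - X ^ j) =
      ∏ j ∈ Finset.Icc (M + 1) (N + M), (1 - X ^ j) := by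
  simpa only [restrictedCountPoly, ← prod_Icc_one_sub_X_pow, zero_add, add_zero] using
    restrictedCountPoly_mul_qPochhammer (R := ℤ) N M
end

section
/- For every real number x > 0, one has ∫_0^x t/(e^t − 1) dt = Li₂(1 − e^{−x}). -/
/-!
Substituting `u = 1 - e^{-t}` turns `t / (e^t - 1) dt` into `-log (1 - u) / u du`, and
`-log (1 - u) / u = ∑ u^k / (k + 1)` can be integrated termwise on `[0, y]` for `|y| < 1`,
since the terms are dominated by `|y|^k`; this gives `∑ y^(k+1) / (k + 1)^2 = Li₂ y`.
-/

/-- The dilogarithm `Li₂(x) = ∑_{k=1}^∞ x^k / k²`. -/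
noncomputable def Li2 (x : ℝ) : ℝ := ∑' k : ℕ, x ^ (k + 1) / ((k : ℝ) + 1) ^ 2

open Real intervalIntegral Set MeasureTheory

lemma hasSum_pow_div_succ_of_abs_lt_one {u : ℝ} (hu : |u| < 1) (hu0 : u ≠ 0) :
    HasSum (fun k : ℕ => u ^ k / ((k : ℝ) + 1)) (-log (1 - u) / u) := by
  refine ((hasSum_pow_div_log_of_abs_lt_one hu).div_const u).congr_fun fun k => ?_
  rw [pow_succ]
  field_simp

lemma integral_pow_div_succ (y : ℝ) (k : ℕ) :
    ∫ u in (0 : ℝ)..y, u ^ k / ((k : ℝ) + 1) = y ^ (k + 1) / ((k : ℝ) + 1) ^ 2 := by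
  rw [intervalIntegral.integral_div, integral_pow]
  field_simp
  simp

theorem integral_neg_log_one_sub_div_eq_Li2 {y : ℝ} (hy : |y| < 1) :
    ∫ u in (0 : ℝ)..y, -log (1 - u) / u = Li2 y := by
  have abs_le {u : ℝ} (hu : u ∈ uIoc 0 y) : |u| ≤ |y| := by
    simpa using abs_sub_left_of_mem_uIcc (uIoc_subset_uIcc hu)
  refine (HasSum.tsum_eq ?_).symm
  simp_rw [← integral_pow_div_succ]
  refine hasSum_integral_of_dominated_convergence (fun k _ => |y| ^ k)
    (fun k => (by fun_prop : Continuous fun u : ℝ => u ^ k / ((k : ℝ) + 1)).aestronglyMeasurable)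
    (fun k => ae_of_all _ fun u hu => ?_)
    (ae_of_all _ fun _ _ => summable_geometric_of_lt_one (abs_nonneg y) hy)
    intervalIntegrable_const ?_
  · rw [norm_div, norm_pow, Real.norm_eq_abs, Real.norm_of_nonneg (by positivity)]
    exact (div_le_self (by positivity) (by simp)).trans
      (pow_le_pow_left₀ (abs_nonneg u) (abs_le hu) k)
  · filter_upwards [Measure.ae_ne volume 0] with u hu0 hu
    exact hasSum_pow_div_succ_of_abs_lt_one ((abs_le hu).trans_lt hy) hu0

/-- At `t = 0` both sides are `0 / 0 = 0`, so no exceptional point is needed. -/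
lemma neg_log_one_sub_div_comp_mul_exp_neg (t : ℝ) :
    -log (1 - (1 - exp (-t))) / (1 - exp (-t)) * exp (-t) = t / (exp t - 1) := by
  rcases eq_or_ne t 0 with rfl | ht
  · simp
  have : exp t - 1 ≠ 0 := by simpa [sub_eq_zero] using ht
  rw [sub_sub_cancel, log_exp, neg_neg, exp_neg]
  field_simp

theorem li2_integral (x : ℝ) (hx : 0 < x) :
    ∫ t in (0 : ℝ)..x, t / (Real.exp t - 1) = Li2 (1 - Real.exp (-x)) := by
  have hsubst := integral_comp_mul_deriv_of_deriv_nonneg (a := 0) (b := x)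
    (f := fun t => 1 - exp (-t)) (f' := fun t => exp (-t)) (g := fun u => -log (1 - u) / u)
    (by fun_prop) (fun t _ => by simpa using ((hasDerivAt_neg t).exp).const_sub 1)
    (fun t _ => (exp_pos _).le)
  simp only [Function.comp_def, neg_log_one_sub_div_comp_mul_exp_neg, neg_zero, exp_zero,
    sub_self] at hsubst
  have hy : |1 - exp (-x)| < 1 := by
    rw [abs_lt]
    constructor <;> linarith [exp_pos (-x), exp_lt_one_iff.mpr (neg_neg_of_pos hx)]
  rw [hsubst, integral_neg_log_one_sub_div_eq_Li2 hy]
end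

section
/- Let α, β > 0 be real numbers with αβ > 2. Then there exists a unique pair of real numbers c₁, c₂ > 0 satisfying the system c₁ = α·A(c₁,c₂) and c₂ = β·A(c₁,c₂). -/
/-!
Writing `f x = x / (eˣ - 1)`, a solution has the form `c = (α t, β t)` with `t = A c > 0`, and
`A (α t) (β t) ^ 2 = t * G t` where `G t = ∫₀^α (f (t u) - f (t u + β t)) du`; so the system
reduces to the scalar equation `G t = t`. Since `f` is strictly convex on `[0, ∞)`,
`G t / t = -β ∫₀^α (slope of f on [t u, t u + β t]) du` is strictly decreasing, which gives
uniqueness. As `t → 0` these slopes tend to `f'(0) = -1/2`, so `G t / t` approaches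
`α β / 2 > 1`, while `0 ≤ f ≤ 1` gives `G t ≤ α < t` for `t > α`; the intermediate value
theorem gives existence.
-/

/-- `A(c₁,c₂) = sqrt(∫_0^{c₁} x/(eˣ−1) dx − ∫_{c₂}^{c₁+c₂} x/(eˣ−1) dx)`. -/
noncomputable def A (c₁ c₂ : ℝ) : ℝ :=
  Real.sqrt ((∫ x in (0 : ℝ)..c₁, x / (Real.exp x - 1)) -
    ∫ x in c₂..(c₁ + c₂), x / (Real.exp x - 1))

open Real Set Filter Topology MeasureTheory intervalIntegral

noncomputable def xDivExpSubOne (x : ℝ) : ℝ := if x = 0 then 1 else x / (exp x - 1)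

lemma exp_sub_one_ne_zero {x : ℝ} (hx : x ≠ 0) : exp x - 1 ≠ 0 :=
  sub_ne_zero.2 fun h => hx (exp_eq_one_iff x |>.1 h)

lemma xDivExpSubOne_of_ne {x : ℝ} (hx : x ≠ 0) : xDivExpSubOne x = x / (exp x - 1) := if_neg hx

lemma xDivExpSubOne_eq_inv_dslope (x : ℝ) : xDivExpSubOne x = (dslope exp 0 x)⁻¹ := by
  rcases eq_or_ne x 0 with rfl | hx
  · simp [xDivExpSubOne, dslope_same]
  · rw [xDivExpSubOne_of_ne hx, dslope_of_ne _ hx, slope_def_field, exp_zero, sub_zero, inv_div]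

@[fun_prop]
lemma continuous_xDivExpSubOne : Continuous xDivExpSubOne := by
  have hdslope : Continuous (dslope exp 0) := continuous_iff_continuousAt.2 fun x => by
    rcases eq_or_ne x 0 with rfl | hx
    · exact continuousAt_dslope_same.2 differentiableAt_exp
    · exact (continuousAt_dslope_of_ne hx).2 continuous_exp.continuousAt
  have hne : ∀ x, dslope exp 0 x ≠ 0 := fun x => by
    rcases eq_or_ne x 0 with rfl | hx
    · simp [dslope_same]
    · rw [dslope_of_ne _ hx, slope_def_field, exp_zero, sub_zero]
      exact div_ne_zero (exp_sub_one_ne_zero hx) hx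
  rw [show xDivExpSubOne = fun x => (dslope exp 0 x)⁻¹ from funext xDivExpSubOne_eq_inv_dslope]
  exact hdslope.inv₀ hne

lemma hasDerivAt_xDivExpSubOne {x : ℝ} (hx : x ≠ 0) :
    HasDerivAt xDivExpSubOne ((exp x - 1 - x * exp x) / (exp x - 1) ^ 2) x := by
  have h := (hasDerivAt_id x).div ((hasDerivAt_exp x).sub_const 1) (exp_sub_one_ne_zero hx)
  refine (h.congr_deriv (by simp only [id_eq]; ring)).congr_of_eventuallyEq ?_
  filter_upwards [eventually_ne_nhds hx] with y hy using xDivExpSubOne_of_ne hy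

lemma hasDerivAt_deriv_xDivExpSubOne {x : ℝ} (hx : x ≠ 0) :
    HasDerivAt (fun y => (exp y - 1 - y * exp y) / (exp y - 1) ^ 2)
      (exp x * (x * (exp x + 1) - 2 * (exp x - 1)) / (exp x - 1) ^ 3) x := by
  have hnum : HasDerivAt (fun y => exp y - 1 - y * exp y) (-(x * exp x)) x :=
    (((hasDerivAt_exp x).sub_const 1).sub ((hasDerivAt_id x).mul (hasDerivAt_exp x))).congr_deriv
      (by simp only [id_eq]; ring)
  have hden : HasDerivAt (fun y => (exp y - 1) ^ 2) (2 * (exp x - 1) * exp x) x :=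
    (((hasDerivAt_exp x).sub_const 1).pow 2).congr_deriv (by ring)
  refine (hnum.div hden (pow_ne_zero 2 (exp_sub_one_ne_zero hx))).congr_deriv ?_
  have := exp_sub_one_ne_zero hx
  field_simp
  ring

lemma two_mul_exp_sub_one_lt {x : ℝ} (hx : 0 < x) : 2 * (exp x - 1) < x * (exp x + 1) := by
  let p : ℝ → ℝ := fun y => y * (exp y + 1) - 2 * (exp y - 1)
  have hp : ∀ y, HasDerivAt p (y * exp y - exp y + 1) y := fun y => by
    have := ((hasDerivAt_id y).mul ((hasDerivAt_exp y).add_const 1)).sub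
      (((hasDerivAt_exp y).sub_const 1).const_mul 2)
    exact this.congr_deriv (by simp only [id_eq]; ring)
  -- `p' y > 0` is `1 - y < exp (-y)` multiplied by `exp y`.
  have hp' : ∀ y ∈ interior (Ici (0 : ℝ)), 0 < deriv p y := fun y hy => by
    rw [interior_Ici] at hy
    have h := mul_lt_mul_of_pos_right (add_one_lt_exp (neg_ne_zero.2 hy.ne')) (exp_pos y)
    rw [← exp_add, neg_add_cancel, exp_zero] at h
    rw [(hp y).deriv]
    linarith
  have := strictMonoOn_of_deriv_pos (convex_Ici 0)
    (fun y _ => (hp y).continuousAt.continuousWithinAt) hp' self_mem_Ici hx.le hx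
  simpa [p] using this

lemma strictMonoOn_deriv_xDivExpSubOne :
    StrictMonoOn (deriv xDivExpSubOne) (Ioi 0) := by
  have hderiv : EqOn (fun y => (exp y - 1 - y * exp y) / (exp y - 1) ^ 2)
      (deriv xDivExpSubOne) (Ioi 0) := fun y hy =>
    (hasDerivAt_xDivExpSubOne (ne_of_gt hy)).deriv.symm
  refine StrictMonoOn.congr ?_ hderiv
  refine strictMonoOn_of_deriv_pos (convex_Ioi 0)
    (fun y hy => (hasDerivAt_deriv_xDivExpSubOne (ne_of_gt hy)).continuousAt.continuousWithinAt)
    fun y hy => ?_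
  rw [interior_Ioi] at hy
  rw [(hasDerivAt_deriv_xDivExpSubOne (ne_of_gt hy)).deriv]
  exact div_pos (mul_pos (exp_pos y) (sub_pos.2 (two_mul_exp_sub_one_lt hy)))
    (pow_pos (sub_pos.2 (one_lt_exp_iff.2 hy)) 3)

lemma strictConvexOn_xDivExpSubOne : StrictConvexOn ℝ (Ici 0) xDivExpSubOne :=
  StrictMonoOn.strictConvexOn_of_deriv (convex_Ici 0) continuous_xDivExpSubOne.continuousOn
    (by simpa only [interior_Ici] using strictMonoOn_deriv_xDivExpSubOne)

lemma xDivExpSubOne_nonneg {x : ℝ} (hx : 0 ≤ x) : 0 ≤ xDivExpSubOne x := by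
  rcases hx.eq_or_lt with rfl | hx
  · simp [xDivExpSubOne]
  · rw [xDivExpSubOne_of_ne hx.ne']
    exact div_nonneg hx.le (sub_pos.2 (one_lt_exp_iff.2 hx)).le

lemma xDivExpSubOne_le_one {x : ℝ} (hx : 0 ≤ x) : xDivExpSubOne x ≤ 1 := by
  rcases hx.eq_or_lt with rfl | hx
  · simp [xDivExpSubOne]
  · rw [xDivExpSubOne_of_ne hx.ne', div_le_one (sub_pos.2 (one_lt_exp_iff.2 hx))]
    linarith [add_one_le_exp x]

lemma one_sub_div_two_le_xDivExpSubOne {x : ℝ} (hx : 0 ≤ x) : 1 - x / 2 ≤ xDivExpSubOne x := by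
  rcases hx.eq_or_lt with rfl | hx
  · simp [xDivExpSubOne]
  · rw [xDivExpSubOne_of_ne hx.ne', le_div_iff₀ (sub_pos.2 (one_lt_exp_iff.2 hx))]
    linarith [two_mul_exp_sub_one_lt hx]

lemma xDivExpSubOne_le {x : ℝ} (hx : 0 ≤ x) : xDivExpSubOne x ≤ 1 - x / 2 + x ^ 2 := by
  rcases hx.eq_or_lt with rfl | hx
  · simp [xDivExpSubOne]
  · rw [xDivExpSubOne_of_ne hx.ne', div_le_iff₀ (sub_pos.2 (one_lt_exp_iff.2 hx))]
    nlinarith [quadratic_le_exp_of_nonneg hx.le, sq_nonneg (x - 1 / 4)]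

theorem StrictConvexOn.secant_lt_secant {𝕜 : Type*} [Field 𝕜] [LinearOrder 𝕜]
    [IsStrictOrderedRing 𝕜] {s : Set 𝕜} {f : 𝕜 → 𝕜} (hf : StrictConvexOn 𝕜 s f) {a b c d : 𝕜}
    (ha : a ∈ s) (hb : b ∈ s) (hc : c ∈ s) (hd : d ∈ s) (hab : a < b) (hac : a < c) (hbd : b < d)
    (hcd : c < d) : (f b - f a) / (b - a) < (f d - f c) / (d - c) := by
  have h₁ := hf.secant_strict_mono ha hb hd hab.ne' (hab.trans hbd).ne' hbd
  have h₂ := hf.secant_strict_mono hd ha hc (hac.trans hcd).ne hcd.ne hac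
  rw [← neg_div_neg_eq, neg_sub, neg_sub] at h₂
  rw [← neg_div_neg_eq (f c - f d), neg_sub, neg_sub] at h₂
  exact h₁.trans h₂

-- The secant on `[a, a + h]` lies below the one on `[C, 2 C]`, which the quadratic bounds on
-- `xDivExpSubOne` put below `-1/2 + 4 C`.
lemma mul_le_xDivExpSubOne_sub {a h C : ℝ} (ha : 0 ≤ a) (hh : 0 < h) (hC : a + h ≤ C) :
    h * (1 / 2 - 4 * C) ≤ xDivExpSubOne a - xDivExpSubOne (a + h) := by
  have hC0 : 0 < C := by linarith
  have hsecant := strictConvexOn_xDivExpSubOne.secant_lt_secant (b := a + h) (c := C) (d := 2 * C)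
    ha (mem_Ici.2 (by linarith)) (mem_Ici.2 hC0.le) (mem_Ici.2 (by linarith)) (by linarith)
    (by linarith) (by linarith) (by linarith)
  rw [add_sub_cancel_left, show 2 * C - C = C by ring, div_lt_div_iff₀ hh hC0] at hsecant
  nlinarith [one_sub_div_two_le_xDivExpSubOne hC0.le, xDivExpSubOne_le (by linarith : 0 ≤ 2 * C)]

noncomputable def gapIntegral (α β t : ℝ) : ℝ :=
  ∫ u in (0 : ℝ)..α, (xDivExpSubOne (t * u) - xDivExpSubOne (t * u + β * t))

lemma integral_div_exp_sub_one (a b : ℝ) :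
    ∫ x in a..b, x / (exp x - 1) = ∫ x in a..b, xDivExpSubOne x :=
  integral_congr_ae <| (volume.ae_ne (0 : ℝ)).mono fun _ hx _ => (xDivExpSubOne_of_ne hx).symm

lemma A_mul_mul (α β t : ℝ) :
    A (α * t) (β * t) = sqrt (t * gapIntegral α β t) := by
  have hshift : ∫ x in β * t..α * t + β * t, xDivExpSubOne x
      = ∫ x in 0..α * t, xDivExpSubOne (x + β * t) := by
    rw [integral_comp_add_right xDivExpSubOne, zero_add]
  have hscale := smul_integral_comp_mul_left
    (fun x => xDivExpSubOne x - xDivExpSubOne (x + β * t)) t (a := 0) (b := α)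
  rw [A, integral_div_exp_sub_one, integral_div_exp_sub_one, hshift,
    ← integral_sub (continuous_xDivExpSubOne.intervalIntegrable _ _)
      ((by fun_prop : Continuous fun x => xDivExpSubOne (x + β * t)).intervalIntegrable _ _)]
  simp only [mul_zero, smul_eq_mul] at hscale
  rw [mul_comm α t, ← hscale, gapIntegral]

lemma continuous_gapIntegral (α β : ℝ) : Continuous (gapIntegral α β) :=
  continuous_parametric_intervalIntegral_of_continuous' (by fun_prop) 0 α

lemma gapIntegral_le {α β t : ℝ} (hα : 0 ≤ α) (hβ : 0 ≤ β) (ht : 0 ≤ t) :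
    gapIntegral α β t ≤ α := by
  have hle : ∀ u ∈ Icc 0 α, xDivExpSubOne (t * u) - xDivExpSubOne (t * u + β * t) ≤ 1 :=
    fun u hu => by
      have htu : 0 ≤ t * u := mul_nonneg ht hu.1
      linarith [xDivExpSubOne_le_one htu,
        xDivExpSubOne_nonneg (add_nonneg htu (mul_nonneg hβ ht))]
  have h := integral_mono_on (μ := volume) hα (Continuous.intervalIntegrable (by fun_prop) _ _)
    intervalIntegrable_const hle
  rwa [intervalIntegral.integral_const, smul_eq_mul, sub_zero, mul_one] at h

lemma le_gapIntegral {α β t : ℝ} (hα : 0 ≤ α) (hβ : 0 < β) (ht : 0 < t) :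
    α * (β * t * (1 / 2 - 4 * ((α + β) * t))) ≤ gapIntegral α β t := by
  have hle : ∀ u ∈ Icc 0 α, β * t * (1 / 2 - 4 * ((α + β) * t))
      ≤ xDivExpSubOne (t * u) - xDivExpSubOne (t * u + β * t) := fun u hu =>
    mul_le_xDivExpSubOne_sub (mul_nonneg ht.le hu.1) (mul_pos hβ ht) (by nlinarith [hu.2])
  have h := integral_mono_on (μ := volume) hα intervalIntegrable_const
    (Continuous.intervalIntegrable (by fun_prop) _ _) hle
  rwa [intervalIntegral.integral_const, smul_eq_mul, sub_zero] at h

lemma xDivExpSubOne_sub_div_lt {β t₁ t₂ u : ℝ} (hβ : 0 < β) (ht₁ : 0 < t₁) (h : t₁ < t₂)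
    (hu : 0 < u) :
    (xDivExpSubOne (t₂ * u) - xDivExpSubOne (t₂ * u + β * t₂)) / t₂
      < (xDivExpSubOne (t₁ * u) - xDivExpSubOne (t₁ * u + β * t₁)) / t₁ := by
  have ht₂ : 0 < t₂ := ht₁.trans h
  have hsecant := strictConvexOn_xDivExpSubOne.secant_lt_secant
    (a := t₁ * u) (b := t₁ * u + β * t₁) (c := t₂ * u) (d := t₂ * u + β * t₂)
    (mem_Ici.2 (by positivity)) (mem_Ici.2 (by positivity)) (mem_Ici.2 (by positivity))
    (mem_Ici.2 (by positivity)) (by nlinarith) (by nlinarith) (by nlinarith) (by nlinarith)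
  rw [add_sub_cancel_left, add_sub_cancel_left, div_lt_div_iff₀ (by positivity) (by positivity)]
    at hsecant
  rw [div_lt_div_iff₀ ht₂ ht₁]
  nlinarith

lemma strictAntiOn_gapIntegral_div {α β : ℝ} (hα : 0 < α) (hβ : 0 < β) :
    StrictAntiOn (fun t => gapIntegral α β t / t) (Ioi 0) := by
  intro t₁ ht₁ t₂ ht₂ h
  simp only [mem_Ioi] at ht₁ ht₂
  simp only [gapIntegral, ← intervalIntegral.integral_div]
  refine integral_lt_integral_of_continuousOn_of_le_of_exists_lt hα (by fun_prop) (by fun_prop)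
    (fun u hu => ?_) ⟨α, right_mem_Icc.2 hα.le, ?_⟩
  · exact (xDivExpSubOne_sub_div_lt hβ ht₁ h hu.1).le
  · exact xDivExpSubOne_sub_div_lt hβ ht₁ h hα

lemma existsUnique_gapIntegral_eq_self {α β : ℝ} (hα : 0 < α) (hβ : 0 < β) (hαβ : 2 < α * β) :
    ∃! t, 0 < t ∧ gapIntegral α β t = t := by
  set t₀ := (α * β - 2) / (16 * (α * β) * (α + β)) with ht₀_def
  have ht₀ : 0 < t₀ := by positivity
  have hlow : t₀ < gapIntegral α β t₀ := by
    refine lt_of_lt_of_le ?_ (le_gapIntegral hα.le hβ ht₀)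
    have h : α * (β * t₀ * (1 / 2 - 4 * ((α + β) * t₀))) = t₀ * ((α * β + 2) / 4) := by
      rw [ht₀_def]
      field_simp
      ring
    rw [h]
    nlinarith
  have hupp : gapIntegral α β (α + 1) < α + 1 := by
    linarith [gapIntegral_le hα.le hβ.le (by linarith : (0 : ℝ) ≤ α + 1)]
  obtain ⟨t, ht, hGt⟩ : ∃ t ∈ uIcc t₀ (α + 1), gapIntegral α β t - t = 0 :=
    intermediate_value_uIcc (f := fun t => gapIntegral α β t - t)
      ((continuous_gapIntegral α β).sub continuous_id).continuousOn
      (mem_uIcc.2 (Or.inr ⟨by linarith, by linarith⟩))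
  have htpos : 0 < t := lt_of_lt_of_le (lt_min ht₀ (by linarith)) ht.1
  refine ⟨t, ⟨htpos, sub_eq_zero.1 hGt⟩, fun s ⟨hs, hGs⟩ => ?_⟩
  refine (strictAntiOn_gapIntegral_div hα hβ).injOn hs htpos ?_
  simp only [hGs, sub_eq_zero.1 hGt, div_self hs.ne', div_self htpos.ne']

theorem change_of_variables_exists_unique (α β : ℝ) (hα : 0 < α) (hβ : 0 < β)
    (hαβ : 2 < α * β) :
    ∃! c : ℝ × ℝ, 0 < c.1 ∧ 0 < c.2 ∧ c.1 = α * A c.1 c.2 ∧ c.2 = β * A c.1 c.2 := by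
  obtain ⟨t, ⟨ht, hGt⟩, hunique⟩ := existsUnique_gapIntegral_eq_self hα hβ hαβ
  have hAt : A (α * t) (β * t) = t := by rw [A_mul_mul, hGt, sqrt_mul_self ht.le]
  refine ⟨(α * t, β * t), ⟨mul_pos hα ht, mul_pos hβ ht, by rw [hAt], by rw [hAt]⟩, ?_⟩
  rintro ⟨c₁, c₂⟩ ⟨hc₁, -, h₁, h₂⟩
  dsimp only at hc₁ h₁ h₂
  set a := A c₁ c₂
  have ha : 0 < a := pos_of_mul_pos_right (h₁ ▸ hc₁) hα.le
  have hAa : sqrt (a * gapIntegral α β a) = a := by rw [← A_mul_mul, ← h₁, ← h₂]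
  have hGa : gapIntegral α β a = a := by
    rw [sqrt_eq_iff_mul_self_eq_of_pos ha] at hAa
    exact (mul_left_cancel₀ ha.ne' hAa).symm
  obtain rfl := hunique a ⟨ha, hGa⟩
  exact Prod.ext h₁ h₂
end

section
/- Let α, β be real numbers with min(α,β) ≥ 4, and let c₁, c₂ > 0 satisfy c₁ = α·A(c₁,c₂) and c₂ = β·A(c₁,c₂). Then min(c₁,c₂) ≥ 13/5. -/
/-!
Since `f x = x / (exp x - 1)` is antitone on `(0, ∞)`, lowering both `c₁` and `c₂` to
`m = min c₁ c₂` can only decrease `A²`, so `A² ≥ ∫₀ᵐ f - ∫ₘ²ᵐ f`. Substituting `x = 2t` and using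
`f t - f (2t) = t / (exp t + 1)`, this equals `2 ∫₀ᵐ t / (exp t + 1) dt ≥ m² / (exp m + 1)`.
On the other hand `cᵢ ≥ 4A` gives `A² ≤ m² / 16`, hence `exp m ≥ 15 > exp (13/5)`.
-/

open Real Set MeasureTheory intervalIntegral

section AntitoneShift

variable {f : ℝ → ℝ}

lemma intervalIntegrable_comp_add_right_of_antitoneOn (hf : AntitoneOn f (Ioi 0)) {a b : ℝ}
    (ha : 0 ≤ a) (hb : 0 < b) : IntervalIntegrable (fun x => f (x + b)) volume 0 a := by
  have hfi : IntervalIntegrable f volume (0 + b) (a + b) :=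
    (hf.mono fun x hx => hb.trans_le <| by
      rw [uIcc_of_le (by linarith)] at hx; linarith [hx.1]).intervalIntegrable
  simpa using hfi.comp_add_right b

lemma integral_sub_integral_shift_eq (hf : AntitoneOn f (Ioi 0)) {a b : ℝ} (ha : 0 ≤ a)
    (hb : 0 < b) (hf₀ : IntervalIntegrable f volume 0 a) :
    (∫ x in (0 : ℝ)..a, f x) - ∫ x in b..(a + b), f x =
      ∫ x in (0 : ℝ)..a, (f x - f (x + b)) := by
  rw [integral_sub hf₀ (intervalIntegrable_comp_add_right_of_antitoneOn hf ha hb),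
    integral_comp_add_right, zero_add]

lemma integral_sub_integral_shift_le (hf : AntitoneOn f (Ioi 0)) {a b m : ℝ} (hm : 0 < m)
    (hma : m ≤ a) (hmb : m ≤ b) (hf₀ : IntervalIntegrable f volume 0 a) :
    (∫ x in (0 : ℝ)..m, f x) - ∫ x in m..(2 * m), f x ≤
      (∫ x in (0 : ℝ)..a, f x) - ∫ x in b..(a + b), f x := by
  have hb : 0 < b := hm.trans_le hmb
  have hsub : uIcc 0 m ⊆ uIcc 0 a := uIcc_subset_uIcc left_mem_uIcc (mem_uIcc_of_le hm.le hma)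
  have hf₀m : IntervalIntegrable f volume 0 m := hf₀.mono_set hsub
  have hgb : IntervalIntegrable (fun x => f x - f (x + b)) volume 0 a :=
    hf₀.sub (intervalIntegrable_comp_add_right_of_antitoneOn hf (hm.le.trans hma) hb)
  rw [two_mul, integral_sub_integral_shift_eq hf hm.le hm hf₀m,
    integral_sub_integral_shift_eq hf (hm.le.trans hma) hb hf₀]
  calc (∫ x in (0 : ℝ)..m, (f x - f (x + m)))
      ≤ ∫ x in (0 : ℝ)..m, (f x - f (x + b)) := by
        refine integral_mono_on hm.le
          (hf₀m.sub (intervalIntegrable_comp_add_right_of_antitoneOn hf hm.le hm))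
          (hgb.mono_set hsub) ?_
        intro x hx
        have : f (x + b) ≤ f (x + m) :=
          hf (by simp only [mem_Ioi]; linarith [hx.1]) (by simp only [mem_Ioi]; linarith [hx.1])
            (by linarith)
        linarith
    _ ≤ ∫ x in (0 : ℝ)..a, (f x - f (x + b)) := by
        refine integral_mono_interval le_rfl hm.le hma ?_ hgb
        refine (ae_restrict_iff' measurableSet_Ioc).2 (Filter.Eventually.of_forall fun x hx => ?_)
        exact sub_nonneg.2 (hf hx.1 (by simp only [mem_Ioi]; linarith [hx.1]) (by linarith))

end AntitoneShift

noncomputable def bose (x : ℝ) : ℝ := x / (exp x - 1)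

lemma bose_antitoneOn : AntitoneOn bose (Ioi 0) := by
  intro x hx y hy hxy
  have hslope := convexOn_exp.secant_mono (a := 0) (mem_univ _) (mem_univ x) (mem_univ y)
    hx.ne' (mem_Ioi.1 hy).ne' hxy
  simp only [exp_zero, sub_zero] at hslope
  have hpos : 0 < (exp x - 1) / x :=
    div_pos (by linarith [add_one_lt_exp hx.ne', mem_Ioi.1 hx]) hx
  simpa only [bose, one_div_div] using one_div_le_one_div_of_le hpos hslope

lemma bose_mem_Icc {x : ℝ} (hx : 0 ≤ x) : bose x ∈ Icc 0 1 := by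
  rcases hx.eq_or_lt with rfl | hx
  · simp [bose]
  have hden : 0 < exp x - 1 := by linarith [add_one_lt_exp hx.ne']
  exact ⟨div_nonneg hx.le hden.le, (div_le_one hden).2 (by linarith [add_one_le_exp x])⟩

lemma intervalIntegrable_bose {t : ℝ} (ht : 0 ≤ t) : IntervalIntegrable bose volume 0 t := by
  rw [intervalIntegrable_iff, uIoc_of_le ht]
  refine Measure.integrableOn_of_bounded (M := 1) measure_Ioc_lt_top.ne
    (measurable_id.div (measurable_exp.sub measurable_const)).aestronglyMeasurable ?_
  refine (ae_restrict_iff' measurableSet_Ioc).2 (Filter.Eventually.of_forall fun x hx => ?_)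
  have := bose_mem_Icc hx.1.le
  rw [norm_eq_abs, abs_of_nonneg this.1]
  exact this.2

lemma bose_sub_bose_two_mul (t : ℝ) : bose t - bose (2 * t) = t / (exp t + 1) := by
  rcases eq_or_ne t 0 with rfl | ht
  · simp [bose]
  have h1 : exp t - 1 ≠ 0 := sub_ne_zero.2 (by simpa using ht)
  have h2 : exp t + 1 ≠ 0 := by positivity
  have h3 : exp (2 * t) - 1 = (exp t - 1) * (exp t + 1) := by
    rw [two_mul, exp_add]; ring
  unfold bose
  rw [h3]
  field_simp
  ring

lemma integral_bose_sub_integral_bose_two_mul {m : ℝ} (hm : 0 ≤ m) :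
    (∫ x in (0 : ℝ)..m, bose x) - ∫ x in m..(2 * m), bose x =
      2 * ∫ t in (0 : ℝ)..m, t / (exp t + 1) := by
  have hdouble : ∫ x in (0 : ℝ)..(2 * m), bose x = 2 * ∫ t in (0 : ℝ)..m, bose (2 * t) := by
    rw [integral_comp_mul_left bose two_ne_zero, mul_zero, smul_eq_mul,
      mul_inv_cancel_left₀ two_ne_zero]
  have hint₂ : IntervalIntegrable (fun t => bose (2 * t)) volume 0 m := by
    simpa using (intervalIntegrable_bose (by linarith : 0 ≤ 2 * m)).comp_mul_left (c := 2)
  rw [← integral_interval_sub_left (intervalIntegrable_bose (by linarith))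
      (intervalIntegrable_bose hm), hdouble, ← integral_congr fun t _ => bose_sub_bose_two_mul t,
    integral_sub (intervalIntegrable_bose hm) hint₂]
  ring

lemma sq_div_exp_add_one_le_integral {m : ℝ} (hm : 0 ≤ m) :
    m ^ 2 / (exp m + 1) ≤ 2 * ∫ t in (0 : ℝ)..m, t / (exp t + 1) := by
  have hconst : ∫ t in (0 : ℝ)..m, t / (exp m + 1) = m ^ 2 / (exp m + 1) / 2 := by
    rw [intervalIntegral.integral_div, integral_id]; ring
  have hmono : ∫ t in (0 : ℝ)..m, t / (exp m + 1) ≤ ∫ t in (0 : ℝ)..m, t / (exp t + 1) :=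
    integral_mono_on hm ((continuous_id.div_const _).intervalIntegrable _ _)
      ((continuous_id.div (continuous_exp.add continuous_const) fun t =>
        (add_pos (exp_pos t) one_pos).ne').intervalIntegrable _ _)
      fun t ht => div_le_div_of_nonneg_left ht.1 (add_pos (exp_pos t) one_pos)
        (by linarith [exp_le_exp.2 ht.2])
  rw [hconst] at hmono
  linarith

lemma sq_div_exp_add_one_le_A_sq {c₁ c₂ : ℝ} (hc₁ : 0 < c₁) (hc₂ : 0 < c₂) :
    min c₁ c₂ ^ 2 / (exp (min c₁ c₂) + 1) ≤ A c₁ c₂ ^ 2 := by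
  set m := min c₁ c₂
  have hm : 0 < m := lt_min hc₁ hc₂
  have hS : m ^ 2 / (exp m + 1) ≤
      (∫ x in (0 : ℝ)..c₁, bose x) - ∫ x in c₂..(c₁ + c₂), bose x := by
    calc m ^ 2 / (exp m + 1)
        ≤ (∫ x in (0 : ℝ)..m, bose x) - ∫ x in m..(2 * m), bose x := by
          rw [integral_bose_sub_integral_bose_two_mul hm.le]
          exact sq_div_exp_add_one_le_integral hm.le
      _ ≤ _ := integral_sub_integral_shift_le bose_antitoneOn hm (min_le_left _ _)
          (min_le_right _ _) (intervalIntegrable_bose hc₁.le)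
  rw [A, sq_sqrt]
  exacts [hS, (by positivity : 0 ≤ m ^ 2 / (exp m + 1)).trans hS]

lemma exp_thirteen_fifths_lt : exp (13 / 5) < 15 := by
  have h5 : exp (13 / 5) ^ 5 = exp 1 ^ 13 := by
    rw [← exp_nat_mul, ← exp_nat_mul]; norm_num
  refine lt_of_pow_lt_pow_left₀ 5 (by norm_num) ?_
  rw [h5]
  calc exp 1 ^ 13 < 2.7182818286 ^ 13 :=
        pow_lt_pow_left₀ exp_one_lt_d9 (exp_pos 1).le (by norm_num)
    _ < 15 ^ 5 := by norm_num

theorem min_c_ge (α β c₁ c₂ : ℝ) (hαβ : 4 ≤ min α β) (hc₁ : 0 < c₁) (hc₂ : 0 < c₂)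
    (h₁ : c₁ = α * A c₁ c₂) (h₂ : c₂ = β * A c₁ c₂) :
    13 / 5 ≤ min c₁ c₂ := by
  set m := min c₁ c₂
  have hA : 0 ≤ A c₁ c₂ := sqrt_nonneg _
  have h4A : 4 * A c₁ c₂ ≤ m :=
    le_min (by nlinarith [min_le_left α β]) (by nlinarith [min_le_right α β])
  have hsq : m ^ 2 / (exp m + 1) ≤ m ^ 2 / 16 :=
    (sq_div_exp_add_one_le_A_sq hc₁ hc₂).trans (by nlinarith)
  have h15 : 15 ≤ exp m := by
    rw [div_le_div_iff_of_pos_left (by positivity) (by positivity) (by norm_num)] at hsq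
    linarith
  exact exp_le_exp.1 (exp_thirteen_fifths_lt.le.trans h15)
end

section
/- There exists a universal constant δ > 0 (indeed δ = π²/6000 works) such that the following holds. For all real c₁, c₂ with min(c₁,c₂) ≥ 13/5, define for c > 0 the function η_c(x) = ∑_{k=1}^∞ (e^{−ck}/k²)·(cos(ckx) − x·sin(ckx)) and H(x) = (1/(1+x²))·(π²/6 + η_{c₁+c₂}(x) − η_{c₁}(x) − η_{c₂}(x)). Then for every x > 0, H(x) ≤ H(0) − δ·x²/(1+x²). -/
open scoped Real

/-- `η_c(x) = ∑_{k=1}^∞ (e^{−ck}/k²)·(cos(ckx) − x·sin(ckx))`. -/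
noncomputable def eta (c x : ℝ) : ℝ :=
  ∑' k : ℕ, (Real.exp (-c * ((k : ℝ) + 1)) / ((k : ℝ) + 1) ^ 2) *
    (Real.cos (c * ((k : ℝ) + 1) * x) - x * Real.sin (c * ((k : ℝ) + 1) * x))

/-- `H(x) = (1/(1+x²))·(π²/6 + η_{c₁+c₂}(x) − η_{c₁}(x) − η_{c₂}(x))`. -/
noncomputable def Hfun (c₁ c₂ x : ℝ) : ℝ :=
  (1 / (1 + x ^ 2)) * (π ^ 2 / 6 + eta (c₁ + c₂) x - eta c₁ x - eta c₂ x)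

/-!
Write `H(x) = N(x) / (1 + x²)`. Termwise, `cos y ≤ 1`, `-sin y ≤ y` and `1 - y²/2 ≤ cos y`
bound `η_c(x) - η_c(0)` above by `c x² / (eᶜ - 1)` and below by `-(c²/2 + c) x² / (eᶜ - 1)`.
For `c₁, c₂ ≥ 13/5` this gives `N(x) ≤ N(0) + (34/25) x²`, while
`N(0) ≥ π²/6 - η_{c₁}(0) - η_{c₂}(0) ≥ π²/6 - 1/6 > 34/25 + π²/6000`.
-/

open Real

lemma cos_mul_sub_mul_sin_mul_sub_one_le {a x : ℝ} (ha : 0 ≤ a) (hx : 0 ≤ x) :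
    cos (a * x) - x * sin (a * x) - 1 ≤ a * x ^ 2 := by
  have hsin : -(a * x) ≤ sin (a * x) :=
    neg_le_of_abs_le (abs_sin_le_abs.trans_eq (abs_of_nonneg (by positivity)))
  nlinarith [cos_le_one (a * x), mul_le_mul_of_nonneg_left hsin hx]

lemma one_sub_cos_mul_add_mul_sin_mul_le {a x : ℝ} (ha : 0 ≤ a) (hx : 0 ≤ x) :
    1 - (cos (a * x) - x * sin (a * x)) ≤ (a ^ 2 / 2 + a) * x ^ 2 := by
  have hsin : sin (a * x) ≤ a * x := sin_le (by positivity)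
  nlinarith [one_sub_sq_div_two_le_cos (x := a * x), mul_le_mul_of_nonneg_left hsin hx]

lemma hasSum_exp_neg_mul_succ {c : ℝ} (hc : 0 < c) :
    HasSum (fun k : ℕ => exp (-c * ((k : ℝ) + 1))) (exp c - 1)⁻¹ := by
  have hq : exp (-c) < 1 := exp_lt_one_iff.mpr (by linarith)
  have hterm : ∀ k : ℕ, exp (-c * ((k : ℝ) + 1)) = exp (-c) * exp (-c) ^ k := fun k => by
    rw [← pow_succ', ← exp_nat_mul]
    push_cast
    ring_nf
  have hsum : exp (-c) * (1 - exp (-c))⁻¹ = (exp c - 1)⁻¹ := by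
    rw [exp_neg]
    field_simp
  simpa only [hterm, hsum] using
    (hasSum_geometric_of_lt_one (exp_pos (-c)).le hq).mul_left (exp (-c))

lemma tsum_le_mul_inv_exp_sub_one {f : ℕ → ℝ} {c C : ℝ} (hc : 0 < c) (hf : Summable f)
    (h : ∀ k : ℕ, f k ≤ C * exp (-c * ((k : ℝ) + 1))) :
    ∑' k, f k ≤ C * (exp c - 1)⁻¹ := by
  have hg := (hasSum_exp_neg_mul_succ hc).mul_left C
  rw [← hg.tsum_eq]
  exact hf.tsum_le_tsum h hg.summable

noncomputable def etaTerm (c x : ℝ) (k : ℕ) : ℝ :=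
  (exp (-c * ((k : ℝ) + 1)) / ((k : ℝ) + 1) ^ 2) *
    (cos (c * ((k : ℝ) + 1) * x) - x * sin (c * ((k : ℝ) + 1) * x))

lemma eta_eq_tsum_etaTerm (c x : ℝ) : eta c x = ∑' k, etaTerm c x k := rfl

section etaTerm

variable {c : ℝ} (x : ℝ) (k : ℕ)

lemma etaTerm_zero : etaTerm c 0 k = exp (-c * ((k : ℝ) + 1)) / ((k : ℝ) + 1) ^ 2 := by
  simp [etaTerm]

lemma etaTerm_zero_nonneg : 0 ≤ etaTerm c 0 k := by
  rw [etaTerm_zero]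
  positivity

lemma etaTerm_zero_le : etaTerm c 0 k ≤ exp (-c * ((k : ℝ) + 1)) := by
  rw [etaTerm_zero]
  exact div_le_self (exp_pos _).le (one_le_pow₀ (by simp))

lemma abs_etaTerm_le : |etaTerm c x k| ≤ (1 + |x|) * exp (-c * ((k : ℝ) + 1)) := by
  have hcs : |cos (c * ((k : ℝ) + 1) * x) - x * sin (c * ((k : ℝ) + 1) * x)| ≤ 1 + |x| := by
    refine (abs_sub _ _).trans (add_le_add (abs_cos_le_one _) ?_)
    rw [abs_mul]
    exact mul_le_of_le_one_right (abs_nonneg x) (abs_sin_le_one _)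
  rw [etaTerm, abs_mul, mul_comm (1 + |x|), abs_of_nonneg (by positivity)]
  have hw : exp (-c * ((k : ℝ) + 1)) / ((k : ℝ) + 1) ^ 2 ≤ exp (-c * ((k : ℝ) + 1)) := by
    simpa only [etaTerm_zero] using etaTerm_zero_le (c := c) k
  exact mul_le_mul hw hcs (abs_nonneg _) (exp_pos _).le

lemma summable_etaTerm (hc : 0 < c) : Summable (etaTerm c x) :=
  .of_norm_bounded ((hasSum_exp_neg_mul_succ hc).summable.mul_left (1 + |x|))
    fun k => abs_etaTerm_le x k

variable {x}

lemma etaTerm_sub_etaTerm_zero_le (hc : 0 ≤ c) (hx : 0 ≤ x) :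
    etaTerm c x k - etaTerm c 0 k ≤ c * x ^ 2 * exp (-c * ((k : ℝ) + 1)) := by
  have hn : (1 : ℝ) ≤ (k : ℝ) + 1 := by simp
  have htrig := cos_mul_sub_mul_sin_mul_sub_one_le (a := c * ((k : ℝ) + 1)) (by positivity) hx
  calc etaTerm c x k - etaTerm c 0 k
      = exp (-c * ((k : ℝ) + 1)) / ((k : ℝ) + 1) ^ 2 *
          (cos (c * ((k : ℝ) + 1) * x) - x * sin (c * ((k : ℝ) + 1) * x) - 1) := by
        rw [etaTerm_zero, etaTerm]; ring
    _ ≤ exp (-c * ((k : ℝ) + 1)) / ((k : ℝ) + 1) ^ 2 * (c * ((k : ℝ) + 1) * x ^ 2) := by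
        gcongr
    _ = c * x ^ 2 * exp (-c * ((k : ℝ) + 1)) / ((k : ℝ) + 1) := by
        field_simp
    _ ≤ c * x ^ 2 * exp (-c * ((k : ℝ) + 1)) := div_le_self (by positivity) hn

lemma etaTerm_zero_sub_etaTerm_le (hc : 0 ≤ c) (hx : 0 ≤ x) :
    etaTerm c 0 k - etaTerm c x k ≤ (c ^ 2 / 2 + c) * x ^ 2 * exp (-c * ((k : ℝ) + 1)) := by
  have hn : (1 : ℝ) ≤ (k : ℝ) + 1 := by simp
  have htrig := one_sub_cos_mul_add_mul_sin_mul_le (a := c * ((k : ℝ) + 1)) (by positivity) hx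
  calc etaTerm c 0 k - etaTerm c x k
      = exp (-c * ((k : ℝ) + 1)) / ((k : ℝ) + 1) ^ 2 *
          (1 - (cos (c * ((k : ℝ) + 1) * x) - x * sin (c * ((k : ℝ) + 1) * x))) := by
        rw [etaTerm_zero, etaTerm]; ring
    _ ≤ exp (-c * ((k : ℝ) + 1)) / ((k : ℝ) + 1) ^ 2 *
          (((c * ((k : ℝ) + 1)) ^ 2 / 2 + c * ((k : ℝ) + 1)) * x ^ 2) := by
        gcongr
    _ = (c ^ 2 / 2 + c / ((k : ℝ) + 1)) * x ^ 2 * exp (-c * ((k : ℝ) + 1)) := by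
        field_simp
    _ ≤ (c ^ 2 / 2 + c) * x ^ 2 * exp (-c * ((k : ℝ) + 1)) := by
        gcongr
        exact div_le_self hc hn

end etaTerm

section eta

variable {c x : ℝ}

lemma eta_zero_nonneg : 0 ≤ eta c 0 :=
  tsum_nonneg etaTerm_zero_nonneg

lemma eta_zero_le (hc : 0 < c) : eta c 0 ≤ (exp c - 1)⁻¹ := by
  simpa [eta_eq_tsum_etaTerm] using tsum_le_mul_inv_exp_sub_one (C := 1) hc (summable_etaTerm 0 hc)
    fun k => (etaTerm_zero_le k).trans_eq (one_mul _).symm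

lemma eta_sub_eta_zero_le (hc : 0 < c) (hx : 0 ≤ x) :
    eta c x - eta c 0 ≤ c * x ^ 2 * (exp c - 1)⁻¹ := by
  rw [eta_eq_tsum_etaTerm, eta_eq_tsum_etaTerm,
    ← (summable_etaTerm x hc).tsum_sub (summable_etaTerm 0 hc)]
  exact tsum_le_mul_inv_exp_sub_one hc ((summable_etaTerm x hc).sub (summable_etaTerm 0 hc))
    fun k => etaTerm_sub_etaTerm_zero_le k hc.le hx

lemma eta_zero_sub_eta_le (hc : 0 < c) (hx : 0 ≤ x) :
    eta c 0 - eta c x ≤ (c ^ 2 / 2 + c) * x ^ 2 * (exp c - 1)⁻¹ := by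
  rw [eta_eq_tsum_etaTerm, eta_eq_tsum_etaTerm,
    ← (summable_etaTerm 0 hc).tsum_sub (summable_etaTerm x hc)]
  exact tsum_le_mul_inv_exp_sub_one hc ((summable_etaTerm 0 hc).sub (summable_etaTerm x hc))
    fun k => etaTerm_zero_sub_etaTerm_le k hc.le hx

end eta

lemma taylor_six_le_exp {c : ℝ} (hc : 0 ≤ c) :
    1 + c + c ^ 2 / 2 + c ^ 3 / 6 + c ^ 4 / 24 + c ^ 5 / 120 + c ^ 6 / 720 ≤ exp c := by
  have h := sum_le_exp_of_nonneg hc 7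
  norm_num [Finset.sum_range_succ, Nat.factorial] at h
  linarith

lemma twelve_le_exp_sub_one {c : ℝ} (hc : 13 / 5 ≤ c) : 12 ≤ exp c - 1 := by
  have := taylor_six_le_exp (c := 13 / 5) (by norm_num)
  have := exp_le_exp.mpr hc
  linarith

lemma quadratic_le_exp_sub_one {c : ℝ} (hc : 13 / 5 ≤ c) :
    c ^ 2 / 2 + c ≤ 13 / 20 * (exp c - 1) := by
  have hc0 : 0 < c := by linarith
  have ht : 0 ≤ c - 13 / 5 := by linarith
  nlinarith [taylor_six_le_exp hc0.le, mul_nonneg ht (sq_nonneg c),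
    mul_nonneg (mul_nonneg ht ht) (sq_nonneg c), mul_nonneg ht ht, pow_pos hc0 5, pow_pos hc0 6]

lemma linear_le_exp_sub_one {s : ℝ} (hs : 26 / 5 ≤ s) : s ≤ 3 / 50 * (exp s - 1) := by
  have hs0 : 0 < s := by linarith
  have ht : 0 ≤ s - 26 / 5 := by linarith
  nlinarith [taylor_six_le_exp hs0.le, mul_nonneg ht (sq_nonneg s),
    mul_nonneg (mul_nonneg ht ht) (sq_nonneg s), mul_nonneg ht ht, pow_pos hs0 5, pow_pos hs0 6]

lemma Hfun_le_Hfun_zero_sub {c₁ c₂ x K δ : ℝ}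
    (hN : π ^ 2 / 6 + eta (c₁ + c₂) x - eta c₁ x - eta c₂ x
      ≤ π ^ 2 / 6 + eta (c₁ + c₂) 0 - eta c₁ 0 - eta c₂ 0 + K * x ^ 2)
    (hK : K + δ ≤ π ^ 2 / 6 + eta (c₁ + c₂) 0 - eta c₁ 0 - eta c₂ 0) :
    Hfun c₁ c₂ x ≤ Hfun c₁ c₂ 0 - δ * x ^ 2 / (1 + x ^ 2) := by
  have hx : 0 < 1 + x ^ 2 := by positivity
  simp only [Hfun]
  rw [one_div, inv_mul_le_iff₀ hx]
  field_simp
  nlinarith [sq_nonneg x]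

section numerator

variable {c₁ c₂ : ℝ}

lemma numerator_le_numerator_zero_add (hc₁ : 13 / 5 ≤ c₁) (hc₂ : 13 / 5 ≤ c₂) {x : ℝ}
    (hx : 0 ≤ x) :
    π ^ 2 / 6 + eta (c₁ + c₂) x - eta c₁ x - eta c₂ x
      ≤ π ^ 2 / 6 + eta (c₁ + c₂) 0 - eta c₁ 0 - eta c₂ 0 + 34 / 25 * x ^ 2 := by
  have hs : eta (c₁ + c₂) x - eta (c₁ + c₂) 0 ≤ 3 / 50 * x ^ 2 := by
    refine (eta_sub_eta_zero_le (by linarith) hx).trans ?_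
    rw [mul_inv_le_iff₀ (by linarith [twelve_le_exp_sub_one (c := c₁ + c₂) (by linarith)])]
    nlinarith [linear_le_exp_sub_one (s := c₁ + c₂) (by linarith), sq_nonneg x]
  have hη : ∀ c : ℝ, 13 / 5 ≤ c → eta c 0 - eta c x ≤ 13 / 20 * x ^ 2 := fun c hc => by
    refine (eta_zero_sub_eta_le (by linarith) hx).trans ?_
    rw [mul_inv_le_iff₀ (by linarith [twelve_le_exp_sub_one hc])]
    nlinarith [quadratic_le_exp_sub_one hc, sq_nonneg x]
  linarith [hη c₁ hc₁, hη c₂ hc₂]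

lemma add_le_numerator_zero (hc₁ : 13 / 5 ≤ c₁) (hc₂ : 13 / 5 ≤ c₂) :
    34 / 25 + π ^ 2 / 6000 ≤ π ^ 2 / 6 + eta (c₁ + c₂) 0 - eta c₁ 0 - eta c₂ 0 := by
  have hη : ∀ c : ℝ, 13 / 5 ≤ c → eta c 0 ≤ 1 / 12 := fun c hc =>
    (eta_zero_le (by linarith)).trans
      (by rw [one_div]; exact inv_anti₀ (by norm_num) (twelve_le_exp_sub_one hc))
  nlinarith [hη c₁ hc₁, hη c₂ hc₂, eta_zero_nonneg (c := c₁ + c₂), pi_gt_d2]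

end numerator

theorem technical_lemma :
    ∃ δ : ℝ, 0 < δ ∧ ∀ c₁ c₂ : ℝ, 13 / 5 ≤ min c₁ c₂ →
      ∀ x : ℝ, 0 < x → Hfun c₁ c₂ x ≤ Hfun c₁ c₂ 0 - δ * x ^ 2 / (1 + x ^ 2) := by
  refine ⟨π ^ 2 / 6000, by positivity, fun c₁ c₂ hmin x hx => ?_⟩
  obtain ⟨hc₁, hc₂⟩ := le_min_iff.mp hmin
  exact Hfun_le_Hfun_zero_sub (numerator_le_numerator_zero_add hc₁ hc₂ hx.le)
    (add_le_numerator_zero hc₁ hc₂)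
end

section
/- For every real number c > 0, one has Li₂(e^{−c}) < (4e^c − 3) / (4(e^{2c} − e^c)). -/
lemma summable_Li2_series {x : ℝ} (hx : |x| ≤ 1) :
    Summable fun k : ℕ => x ^ (k + 1) / ((k : ℝ) + 1) ^ 2 := by
  have hsum : Summable fun k : ℕ => 1 / ((k : ℝ) + 1) ^ 2 := by
    exact_mod_cast (summable_nat_add_iff 1).mpr (Real.summable_one_div_nat_pow.mpr one_lt_two)
  refine Summable.of_norm_bounded hsum fun k => ?_
  rw [norm_div, norm_pow, norm_pow, Real.norm_eq_abs, Real.norm_eq_abs,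
    abs_of_nonneg (by positivity : (0 : ℝ) ≤ k + 1)]
  gcongr
  exact pow_le_one₀ (abs_nonneg x) hx

lemma Li2_eq_add_tsum {x : ℝ} (hx : |x| ≤ 1) :
    Li2 x = x + ∑' k : ℕ, x ^ (k + 2) / ((k : ℝ) + 2) ^ 2 := by
  rw [Li2, (summable_Li2_series hx).tsum_eq_zero_add]
  push_cast
  ring_nf

lemma Li2_lt_of_pos_of_lt_one {x : ℝ} (hx₀ : 0 < x) (hx₁ : x < 1) :
    Li2 x < x + x ^ 2 / (4 * (1 - x)) := by
  have hx : |x| ≤ 1 := abs_le.mpr ⟨by linarith, hx₁.le⟩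
  have hgeom : HasSum (fun k : ℕ => x ^ (k + 2) / 4) (x ^ 2 / (4 * (1 - x))) := by
    rw [← div_div, div_eq_mul_inv _ (1 - x)]
    exact ((hasSum_geometric_of_lt_one hx₀.le hx₁).mul_left (x ^ 2 / 4)).congr_fun
      fun k => by ring
  have htail : Summable fun k : ℕ => x ^ (k + 2) / ((k : ℝ) + 2) ^ 2 := by
    refine ((summable_nat_add_iff 1).mpr (summable_Li2_series hx)).congr fun k => ?_
    push_cast
    ring_nf
  rw [Li2_eq_add_tsum hx, ← hgeom.tsum_eq, add_lt_add_iff_left]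
  refine htail.tsum_lt_tsum (i := 1) (fun k => ?_) ?_ hgeom.summable
  · gcongr
    nlinarith [k.cast_nonneg (α := ℝ)]
  · norm_num
    linarith [pow_pos hx₀ 3]

theorem li2_exp_neg_lt (c : ℝ) (hc : 0 < c) :
    Li2 (Real.exp (-c)) <
      (4 * Real.exp c - 3) / (4 * (Real.exp (2 * c) - Real.exp c)) := by
  have hexp : 1 < Real.exp c := Real.one_lt_exp_iff.mpr hc
  have hx₁ : Real.exp (-c) < 1 := Real.exp_lt_one_iff.mpr (neg_neg_of_pos hc)
  refine (Li2_lt_of_pos_of_lt_one (Real.exp_pos _) hx₁).trans_eq ?_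
  rw [Real.exp_neg, two_mul, Real.exp_add]
  have : Real.exp c - 1 ≠ 0 := (sub_pos.mpr hexp).ne'
  field_simp
  ring
end

section
/- For all real c₁, c₂ > 0, one has the identity 2·A(c₁,c₂)² + (c₁+c₂)²/(e^{c₁+c₂} − 1) − c₁²/(e^{c₁} − 1) − c₂²/(e^{c₂} − 1) = ∫_0^{c₁} x²e^x/(e^x − 1)² dx − ∫_{c₂}^{c₁+c₂} x²e^x/(e^x − 1)² dx. Moreover, if additionally c₁ ≤ c₂, this quantity is at least ∫_0^{c₁} x²e^x/(e^x − 1)² dx − ∫_{c₁}^{2c₁} x²e^x/(e^x − 1)² dx, which is strictly positive. -/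
open Real Set MeasureTheory Filter Topology

lemma strictConvexOn_sinh : StrictConvexOn ℝ (Ici 0) sinh := by
  refine strictConvexOn_of_deriv2_pos (convex_Ici 0) continuous_sinh.continuousOn fun x hx ↦ ?_
  have hsinh'' : deriv^[2] sinh = sinh := by
    ext y
    simp [Function.iterate_succ_apply', Real.deriv_sinh, Real.deriv_cosh]
  rw [interior_Ici] at hx
  simpa [hsinh''] using hx

lemma strictAntiOn_div_sinh : StrictAntiOn (fun t ↦ t / sinh t) (Ioi 0) := by
  intro a ha b hb hab
  have hslope : sinh a / a < sinh b / b := by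
    simpa using strictConvexOn_sinh.secant_strict_mono (a := 0) (x := a) (y := b)
      self_mem_Ici (mem_Ici_of_Ioi ha) (mem_Ici_of_Ioi hb) ha.ne' hb.ne' hab
  simpa only [inv_div] using inv_strictAnti₀ (div_pos (sinh_pos_iff.mpr ha) ha) hslope

lemma div_sinh_nonneg {t : ℝ} (ht : 0 ≤ t) : 0 ≤ t / sinh t :=
  div_nonneg ht (sinh_nonneg_iff.mpr ht)

lemma div_sinh_le_one {t : ℝ} (ht : 0 ≤ t) : t / sinh t ≤ 1 :=
  div_le_one_of_le₀ (self_le_sinh_iff.mpr ht) (sinh_nonneg_iff.mpr ht)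

lemma exp_sub_one_eq_mul_sinh (x : ℝ) : exp x - 1 = 2 * exp (x / 2) * sinh (x / 2) := by
  have h₁ : exp (x / 2) * exp (x / 2) = exp x := by rw [← exp_add, add_halves]
  have h₂ : exp (x / 2) * exp (-(x / 2)) = 1 := by rw [← exp_add, add_neg_cancel, exp_zero]
  rw [sinh_eq]
  linear_combination -h₁ + h₂

lemma div_exp_sub_one_eq (x : ℝ) :
    x / (exp x - 1) = exp (-(x / 2)) * (x / 2 / sinh (x / 2)) := by
  rw [exp_sub_one_eq_mul_sinh, exp_neg]
  field_simp

lemma sq_mul_exp_div_exp_sub_one_sq_eq (x : ℝ) :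
    x ^ 2 * exp x / (exp x - 1) ^ 2 = (x / 2 / sinh (x / 2)) ^ 2 := by
  have hx : exp x = exp (x / 2) ^ 2 := by rw [← exp_nat_mul]; ring_nf
  rw [exp_sub_one_eq_mul_sinh, hx]
  field_simp

lemma strictAntiOn_div_exp_sub_one : StrictAntiOn (fun x ↦ x / (exp x - 1)) (Ioi 0) := by
  intro a ha b hb hab
  have ha2 : 0 < a / 2 := half_pos ha
  have hb2 : 0 < b / 2 := half_pos hb
  simp only [div_exp_sub_one_eq]
  exact mul_lt_mul'' (exp_lt_exp.mpr (by linarith))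
    (strictAntiOn_div_sinh ha2 hb2 (by linarith)) (exp_pos _).le (div_sinh_nonneg hb2.le)

lemma strictAntiOn_sq_mul_exp_div_exp_sub_one_sq :
    StrictAntiOn (fun x ↦ x ^ 2 * exp x / (exp x - 1) ^ 2) (Ioi 0) := by
  intro a ha b hb hab
  have ha2 : 0 < a / 2 := half_pos ha
  have hb2 : 0 < b / 2 := half_pos hb
  simp only [sq_mul_exp_div_exp_sub_one_sq_eq]
  exact pow_lt_pow_left₀ (strictAntiOn_div_sinh ha2 hb2 (by linarith)) (div_sinh_nonneg hb2.le)
    two_ne_zero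

lemma norm_div_exp_sub_one_le_one {x : ℝ} (hx : 0 ≤ x) : ‖x / (exp x - 1)‖ ≤ 1 := by
  have hx2 : 0 ≤ x / 2 := by positivity
  rw [div_exp_sub_one_eq, norm_of_nonneg (mul_nonneg (exp_pos _).le (div_sinh_nonneg hx2))]
  exact mul_le_one₀ (exp_le_one_iff.mpr (by linarith)) (div_sinh_nonneg hx2) (div_sinh_le_one hx2)

lemma norm_sq_mul_exp_div_exp_sub_one_sq_le_one {x : ℝ} (hx : 0 ≤ x) :
    ‖x ^ 2 * exp x / (exp x - 1) ^ 2‖ ≤ 1 := by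
  have hx2 : 0 ≤ x / 2 := by positivity
  rw [sq_mul_exp_div_exp_sub_one_sq_eq, norm_pow, norm_of_nonneg (div_sinh_nonneg hx2)]
  exact pow_le_one₀ (div_sinh_nonneg hx2) (div_sinh_le_one hx2)

lemma intervalIntegrable_of_norm_le {f : ℝ → ℝ} {a b C : ℝ} (hf : Measurable f)
    (hC : ∀ x ∈ uIoc a b, ‖f x‖ ≤ C) : IntervalIntegrable f volume a b :=
  intervalIntegrable_const.mono_fun' hf.aestronglyMeasurable
    (ae_restrict_of_forall_mem measurableSet_uIoc hC)

lemma intervalIntegrable_div_exp_sub_one {a b : ℝ} (ha : 0 ≤ a) (hb : 0 ≤ b) :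
    IntervalIntegrable (fun x ↦ x / (exp x - 1)) volume a b :=
  intervalIntegrable_of_norm_le (by fun_prop) fun x hx ↦
    norm_div_exp_sub_one_le_one (le_min ha hb |>.trans hx.1.le)

lemma intervalIntegrable_sq_mul_exp_div_exp_sub_one_sq {a b : ℝ} (ha : 0 ≤ a) (hb : 0 ≤ b) :
    IntervalIntegrable (fun x ↦ x ^ 2 * exp x / (exp x - 1) ^ 2) volume a b :=
  intervalIntegrable_of_norm_le (by fun_prop) fun x hx ↦
    norm_sq_mul_exp_div_exp_sub_one_sq_le_one (le_min ha hb |>.trans hx.1.le)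

lemma hasDerivAt_sq_div_exp_sub_one {x : ℝ} (hx : x ≠ 0) :
    HasDerivAt (fun y ↦ y ^ 2 / (exp y - 1))
      (2 * (x / (exp x - 1)) - x ^ 2 * exp x / (exp x - 1) ^ 2) x := by
  have hne : exp x - 1 ≠ 0 := sub_ne_zero.mpr ((exp_eq_one_iff x).not.mpr hx)
  refine ((hasDerivAt_pow 2 x).div ((hasDerivAt_exp x).sub_const 1) hne).congr_deriv ?_
  field_simp
  ring

lemma continuousOn_sq_div_exp_sub_one : ContinuousOn (fun x ↦ x ^ 2 / (exp x - 1)) (Ici 0) := by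
  intro x hx
  rcases (mem_Ici.mp hx).eq_or_lt with rfl | hx
  -- The junk value `0 / 0 = 0` is also the limit, as `y ^ 2 / (exp y - 1) = y * (y / (exp y - 1))`.
  · have hbdd : IsBoundedUnder (· ≤ ·) (𝓝[Ici 0] 0) (fun y ↦ ‖y / (exp y - 1)‖) := by
      refine isBoundedUnder_of_eventually_le (a := 1) (eventually_nhdsWithin_of_forall ?_)
      exact fun y hy ↦ norm_div_exp_sub_one_le_one hy
    have := (tendsto_id.mono_left nhdsWithin_le_nhds).zero_mul_isBoundedUnder_le hbdd
    simpa [ContinuousWithinAt, sq, mul_div_assoc] using this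
  · have hne : exp x - 1 ≠ 0 := sub_ne_zero.mpr ((exp_eq_one_iff x).not.mpr hx.ne')
    exact ((continuousAt_pow x 2).div (continuous_exp.continuousAt.sub continuousAt_const)
      hne).continuousWithinAt

lemma two_mul_integral_sub_integral_eq {a b : ℝ} (ha : 0 ≤ a) (hab : a ≤ b) :
    (2 * ∫ x in a..b, x / (exp x - 1)) - ∫ x in a..b, x ^ 2 * exp x / (exp x - 1) ^ 2 =
      b ^ 2 / (exp b - 1) - a ^ 2 / (exp a - 1) := by
  have hf := intervalIntegrable_div_exp_sub_one ha (ha.trans hab)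
  have hg := intervalIntegrable_sq_mul_exp_div_exp_sub_one_sq ha (ha.trans hab)
  rw [← intervalIntegral.integral_const_mul, ← intervalIntegral.integral_sub (hf.const_mul 2) hg]
  exact intervalIntegral.integral_eq_sub_of_hasDerivAt_of_le hab
    (continuousOn_sq_div_exp_sub_one.mono (Icc_subset_Ici_self.trans (Ici_subset_Ici.mpr ha)))
    (fun x hx ↦ hasDerivAt_sq_div_exp_sub_one (ha.trans_lt hx.1).ne') ((hf.const_mul 2).sub hg)

section Translation

variable {f : ℝ → ℝ} {a b a' b' d : ℝ}

lemma IntervalIntegrable.and_comp_add_right_of_le (hfi : IntervalIntegrable f volume a (b + d))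
    (hab : a ≤ b) (hd : 0 ≤ d) :
    IntervalIntegrable f volume a b ∧ IntervalIntegrable (fun x ↦ f (x + d)) volume a b := by
  have hb : b ∈ uIcc a (b + d) := Icc_subset_uIcc ⟨hab, by linarith⟩
  have had : a + d ∈ uIcc a (b + d) := Icc_subset_uIcc ⟨by linarith, by linarith⟩
  refine ⟨hfi.mono_set (uIcc_subset_uIcc left_mem_uIcc hb), ?_⟩
  simpa using (hfi.mono_set (uIcc_subset_uIcc had right_mem_uIcc)).comp_add_right d

lemma AntitoneOn.integral_le_integral_of_translate (hf : AntitoneOn f (Ioi a))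
    (hfi : IntervalIntegrable f volume a b') (hab : a ≤ b) (ha' : a ≤ a')
    (hlen : b' - a' = b - a) : ∫ x in a'..b', f x ≤ ∫ x in a..b, f x := by
  obtain ⟨d, hd, rfl⟩ : ∃ d, 0 ≤ d ∧ a' = a + d := ⟨a' - a, by linarith, by ring⟩
  obtain rfl : b' = b + d := by linarith
  obtain ⟨hf₀, hf_d⟩ := hfi.and_comp_add_right_of_le hab hd
  rw [← intervalIntegral.integral_comp_add_right]
  exact intervalIntegral.integral_mono_on_of_le_Ioo hab hf_d hf₀ fun x hx ↦
    hf hx.1 (mem_Ioi.mpr (by linarith [show a < x from hx.1])) (by linarith)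

lemma StrictAntiOn.integral_lt_integral_of_translate (hf : StrictAntiOn f (Ioi a))
    (hfi : IntervalIntegrable f volume a b') (hab : a < b) (ha' : a < a')
    (hlen : b' - a' = b - a) : ∫ x in a'..b', f x < ∫ x in a..b, f x := by
  obtain ⟨d, hd, rfl⟩ : ∃ d, 0 < d ∧ a' = a + d := ⟨a' - a, by linarith, by ring⟩
  obtain rfl : b' = b + d := by linarith
  obtain ⟨hf₀, hf_d⟩ := hfi.and_comp_add_right_of_le hab.le hd.le
  rw [← intervalIntegral.integral_comp_add_right, ← sub_pos,
    ← intervalIntegral.integral_sub hf₀ hf_d]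
  refine intervalIntegral.intervalIntegral_pos_of_pos_on (hf₀.sub hf_d) (fun x hx ↦ ?_) hab
  exact sub_pos.mpr (hf hx.1 (mem_Ioi.mpr (by linarith [show a < x from hx.1])) (by linarith))

end Translation

lemma sq_A {c₁ c₂ : ℝ} (hc₁ : 0 ≤ c₁) (hc₂ : 0 ≤ c₂) :
    A c₁ c₂ ^ 2 = (∫ x in (0 : ℝ)..c₁, x / (exp x - 1)) - ∫ x in c₂..(c₁ + c₂), x / (exp x - 1) :=
  sq_sqrt <| sub_nonneg.mpr <|
    strictAntiOn_div_exp_sub_one.antitoneOn.integral_le_integral_of_translate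
      (intervalIntegrable_div_exp_sub_one le_rfl (by positivity)) hc₁ hc₂ (by ring)

theorem L_identity_and_positivity (c₁ c₂ : ℝ) (hc₁ : 0 < c₁) (hc₂ : 0 < c₂) :
    (2 * A c₁ c₂ ^ 2 + (c₁ + c₂) ^ 2 / (Real.exp (c₁ + c₂) - 1)
        - c₁ ^ 2 / (Real.exp c₁ - 1) - c₂ ^ 2 / (Real.exp c₂ - 1) =
      (∫ x in (0 : ℝ)..c₁, x ^ 2 * Real.exp x / (Real.exp x - 1) ^ 2) -
        ∫ x in c₂..(c₁ + c₂), x ^ 2 * Real.exp x / (Real.exp x - 1) ^ 2) ∧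
    (c₁ ≤ c₂ →
      ((∫ x in (0 : ℝ)..c₁, x ^ 2 * Real.exp x / (Real.exp x - 1) ^ 2) -
          ∫ x in c₁..(2 * c₁), x ^ 2 * Real.exp x / (Real.exp x - 1) ^ 2) ≤
        2 * A c₁ c₂ ^ 2 + (c₁ + c₂) ^ 2 / (Real.exp (c₁ + c₂) - 1)
          - c₁ ^ 2 / (Real.exp c₁ - 1) - c₂ ^ 2 / (Real.exp c₂ - 1) ∧
      0 < (∫ x in (0 : ℝ)..c₁, x ^ 2 * Real.exp x / (Real.exp x - 1) ^ 2) -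
          ∫ x in c₁..(2 * c₁), x ^ 2 * Real.exp x / (Real.exp x - 1) ^ 2) := by
  have hg := strictAntiOn_sq_mul_exp_div_exp_sub_one_sq
  have h₁ := two_mul_integral_sub_integral_eq le_rfl hc₁.le
  rw [zero_pow two_ne_zero, zero_div, sub_zero] at h₁
  have h₂ := two_mul_integral_sub_integral_eq hc₂.le (le_add_of_nonneg_left hc₁.le)
  have hA := sq_A hc₁.le hc₂.le
  refine ⟨by linarith, fun hc ↦ ⟨?_, ?_⟩⟩
  · have : ∫ x in c₂..(c₁ + c₂), x ^ 2 * exp x / (exp x - 1) ^ 2 ≤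
        ∫ x in c₁..(2 * c₁), x ^ 2 * exp x / (exp x - 1) ^ 2 :=
      (hg.mono (Ioi_subset_Ioi hc₁.le)).antitoneOn.integral_le_integral_of_translate
        (intervalIntegrable_sq_mul_exp_div_exp_sub_one_sq hc₁.le (by positivity))
        (by linarith) hc (by ring)
    linarith
  · exact sub_pos.mpr <| hg.integral_lt_integral_of_translate
      (intervalIntegrable_sq_mul_exp_div_exp_sub_one_sq le_rfl (by positivity)) hc₁ hc₁ (by ring)
end

section
/- For all positive integers N, M and every complex number z with Re(z) > 0, one has ∏_{j=M+1}^{N+M} (1 − e^{−jz}) / ∏_{j=1}^{N} (1 − e^{−jz}) = exp( ∑_{k=1}^∞ (1/k) · e^{−kz}(1 − e^{−kNz})(1 − e^{−kMz}) / (1 − e^{−kz}) ), where the series on the right converges absolutely. -/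
/-!
Put `q = e^{-z}`, so `‖q‖ < 1`. Each factor is `1 - q^j = exp (log (1 - q^j))`, and
`-log (1 - q^j) = ∑_{k ≥ 1} q^{jk} / k`. Summing over `j ∈ [1, N]` and subtracting the sum over
`j ∈ [M + 1, N + M]` collapses, for each `k`, to the finite geometric identity
`∑_{j=1}^{N} x^j - ∑_{j=M+1}^{N+M} x^j = x (1 - x^N) (1 - x^M) / (1 - x)` at `x = q^k`.
Absolute convergence follows because every `∑_k q^{jk} / k` converges absolutely.
-/

open Complex Finset

lemma geom_sum_Icc_sub_geom_sum_Icc {K : Type*} [Field K] {x : K} (hx : x ≠ 1) (N M : ℕ) :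
    ∑ j ∈ Icc 1 N, x ^ j - ∑ j ∈ Icc (M + 1) (N + M), x ^ j
      = x * (1 - x ^ N) * (1 - x ^ M) / (1 - x) := by
  have h1x : 1 - x ≠ 0 := sub_ne_zero.mpr hx.symm
  rw [← Ico_add_one_right_eq_Icc, ← Ico_add_one_right_eq_Icc,
    geom_sum_Ico' hx (by omega), geom_sum_Ico' hx (by omega)]
  field_simp
  ring

lemma Complex.summable_norm_pow_succ_div {x : ℂ} (hx : ‖x‖ < 1) :
    Summable fun n : ℕ => ‖x ^ (n + 1) / ((n : ℂ) + 1)‖ := by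
  refine .of_nonneg_of_le (fun _ => norm_nonneg _) (fun n => ?_)
    ((summable_nat_add_iff 1).mpr (summable_geometric_of_lt_one (norm_nonneg x) hx))
  rw [norm_div, norm_pow]
  refine div_le_self (by positivity) ?_
  exact_mod_cast (Nat.le_add_left 1 n).trans_eq (by simp)

lemma Complex.exp_neg_natCast_mul (z : ℂ) (n : ℕ) : exp (-(n : ℂ) * z) = exp (-z) ^ n := by
  rw [← exp_nat_mul]
  ring_nf

lemma Complex.norm_exp_neg_lt_one {z : ℂ} (hz : 0 < z.re) : ‖exp (-z)‖ < 1 := by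
  simpa [norm_exp] using hz

lemma norm_pow_lt_one {𝕜 : Type*} [NormedDivisionRing 𝕜] {q : 𝕜} (hq : ‖q‖ < 1) {j : ℕ} (hj : j ≠ 0) : ‖q ^ j‖ < 1 := by
  rw [norm_pow]
  exact pow_lt_one₀ (norm_nonneg q) hq hj

lemma norm_pow_lt_one_of_mem_Icc {𝕜 : Type*} [NormedDivisionRing 𝕜] {q : 𝕜} (hq : ‖q‖ < 1) {j a b : ℕ} (ha : 1 ≤ a)
    (hj : j ∈ Icc a b) : ‖q ^ j‖ < 1 :=
  norm_pow_lt_one hq (by grind)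

lemma Complex.prod_one_sub_pow_eq_exp_sum_log {q : ℂ} (hq : ‖q‖ < 1) {s : Finset ℕ}
    (hs : 0 ∉ s) : ∏ j ∈ s, (1 - q ^ j) = exp (∑ j ∈ s, log (1 - q ^ j)) := by
  rw [exp_sum]
  refine prod_congr rfl fun j hj => (exp_log ?_).symm
  refine sub_ne_zero.mpr fun h => ?_
  simpa [← h] using norm_pow_lt_one hq (ne_of_mem_of_not_mem hj hs)

noncomputable def expSeriesTerm (N M : ℕ) (q : ℂ) (k : ℕ) : ℂ :=
  1 / ((k : ℂ) + 1) * (q ^ (k + 1) * (1 - (q ^ (k + 1)) ^ N) * (1 - (q ^ (k + 1)) ^ M)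
    / (1 - q ^ (k + 1)))

section expSeriesTerm

variable {q : ℂ} (hq : ‖q‖ < 1) (N M : ℕ)
include hq

lemma expSeriesTerm_eq_sum_sub_sum (k : ℕ) :
    expSeriesTerm N M q k = ∑ j ∈ Icc 1 N, (q ^ j) ^ (k + 1) / ((k : ℂ) + 1)
      - ∑ j ∈ Icc (M + 1) (N + M), (q ^ j) ^ (k + 1) / ((k : ℂ) + 1) := by
  have hqk : q ^ (k + 1) ≠ 1 := fun h => by
    simpa [h] using norm_pow_lt_one hq k.succ_ne_zero
  have hswap (j : ℕ) : (q ^ j) ^ (k + 1) = (q ^ (k + 1)) ^ j := by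
    rw [← pow_mul, ← pow_mul, mul_comm]
  simp only [hswap]
  rw [← sum_div, ← sum_div, ← sub_div, geom_sum_Icc_sub_geom_sum_Icc hqk, expSeriesTerm]
  ring

lemma summable_norm_expSeriesTerm : Summable fun k => ‖expSeriesTerm N M q k‖ := by
  have hg (a b : ℕ) (ha : 1 ≤ a) : Summable fun k : ℕ => ∑ j ∈ Icc a b,
      ‖(q ^ j) ^ (k + 1) / ((k : ℂ) + 1)‖ :=
    summable_sum fun j hj => summable_norm_pow_succ_div (norm_pow_lt_one_of_mem_Icc hq ha hj)
  refine .of_nonneg_of_le (fun _ => norm_nonneg _) (fun k => ?_)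
    ((hg 1 N le_rfl).add (hg (M + 1) (N + M) (Nat.le_add_left 1 M)))
  rw [expSeriesTerm_eq_sum_sub_sum hq]
  exact (norm_sub_le _ _).trans (add_le_add (norm_sum_le _ _) (norm_sum_le _ _))

lemma hasSum_expSeriesTerm :
    HasSum (expSeriesTerm N M q)
      (∑ j ∈ Icc 1 N, -log (1 - q ^ j) - ∑ j ∈ Icc (M + 1) (N + M), -log (1 - q ^ j)) := by
  have hg (a b : ℕ) (ha : 1 ≤ a) : HasSum (fun k : ℕ => ∑ j ∈ Icc a b,
      (q ^ j) ^ (k + 1) / ((k : ℂ) + 1)) (∑ j ∈ Icc a b, -log (1 - q ^ j)) :=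
    hasSum_sum fun j hj => hasSum_taylorSeries_neg_log' (norm_pow_lt_one_of_mem_Icc hq ha hj)
  rw [funext (expSeriesTerm_eq_sum_sub_sum hq N M)]
  exact (hg 1 N le_rfl).sub (hg (M + 1) (N + M) (Nat.le_add_left 1 M))

end expSeriesTerm

theorem generating_function_exp_series_general (N M : ℕ)
    (z : ℂ) (hz : 0 < z.re) :
    Summable (fun k : ℕ =>
      ‖(1 / ((k : ℂ) + 1)) * (Complex.exp (-((k : ℂ) + 1) * z)
          * (1 - Complex.exp (-((k : ℂ) + 1) * (N : ℂ) * z))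
          * (1 - Complex.exp (-((k : ℂ) + 1) * (M : ℂ) * z))
          / (1 - Complex.exp (-((k : ℂ) + 1) * z)))‖) ∧
    (∏ j ∈ Finset.Icc (M + 1) (N + M), (1 - Complex.exp (-(j : ℂ) * z))) /
        (∏ j ∈ Finset.Icc 1 N, (1 - Complex.exp (-(j : ℂ) * z))) =
      Complex.exp (∑' k : ℕ,
        (1 / ((k : ℂ) + 1)) * (Complex.exp (-((k : ℂ) + 1) * z)
          * (1 - Complex.exp (-((k : ℂ) + 1) * (N : ℂ) * z))
          * (1 - Complex.exp (-((k : ℂ) + 1) * (M : ℂ) * z))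
          / (1 - Complex.exp (-((k : ℂ) + 1) * z)))) := by
  set q := exp (-z)
  have hq : ‖q‖ < 1 := norm_exp_neg_lt_one hz
  have hexp_succ (k : ℕ) : exp (-((k : ℂ) + 1) * z) = q ^ (k + 1) := by
    rw [← exp_neg_natCast_mul]
    push_cast
    rfl
  have hexp_succ_mul (k n : ℕ) : exp (-((k : ℂ) + 1) * n * z) = (q ^ (k + 1)) ^ n := by
    rw [← pow_mul, ← exp_neg_natCast_mul]
    push_cast
    ring_nf
  simp only [hexp_succ, hexp_succ_mul, exp_neg_natCast_mul]
  refine ⟨summable_norm_expSeriesTerm hq N M, ?_⟩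
  rw [prod_one_sub_pow_eq_exp_sum_log hq (by simp), prod_one_sub_pow_eq_exp_sum_log hq (by simp),
    ← exp_sub]
  change _ = exp (∑' k, expSeriesTerm N M q k)
  rw [(hasSum_expSeriesTerm hq N M).tsum_eq]
  congr 1
  simp only [sum_neg_distrib]
  ring

theorem generating_function_exp_series (N M : ℕ) (hN : 0 < N) (hM : 0 < M)
    (z : ℂ) (hz : 0 < z.re) :
    Summable (fun k : ℕ =>
      ‖(1 / ((k : ℂ) + 1)) * (Complex.exp (-((k : ℂ) + 1) * z)
          * (1 - Complex.exp (-((k : ℂ) + 1) * (N : ℂ) * z))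
          * (1 - Complex.exp (-((k : ℂ) + 1) * (M : ℂ) * z))
          / (1 - Complex.exp (-((k : ℂ) + 1) * z)))‖) ∧
    (∏ j ∈ Finset.Icc (M + 1) (N + M), (1 - Complex.exp (-(j : ℂ) * z))) /
        (∏ j ∈ Finset.Icc 1 N, (1 - Complex.exp (-(j : ℂ) * z))) =
      Complex.exp (∑' k : ℕ,
        (1 / ((k : ℂ) + 1)) * (Complex.exp (-((k : ℂ) + 1) * z)
          * (1 - Complex.exp (-((k : ℂ) + 1) * (N : ℂ) * z))
          * (1 - Complex.exp (-((k : ℂ) + 1) * (M : ℂ) * z))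
          / (1 - Complex.exp (-((k : ℂ) + 1) * z)))) :=
  generating_function_exp_series_general N M z hz
end
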